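/- Let (S_k)_{k≥1} be a random walk with i.i.d. increments of mean μ ∈ ℝ and finite second moment, and let L > 0. Then Σ_{k=1}^∞ P(S_k > (L + μ)k) < ∞. -/

import Mathlib

open MeasureTheory ProbabilityTheory Filter Finset Real
open scoped ENNReal

/-!
Center the increments, so that `E Y = 0` and `E Y² = V < ∞`, and truncate them at level `Ln/12`.
If the walk of length `n` crosses `Ln`, either some increment has size at least `Ln/12`, which has
probability at most `n P(|Y| ≥ Ln/12)`, summable in `n` precisely because `E Y² < ∞`; or the
truncated walk crosses `Ln`. The truncated increments are bounded by `Ln/12`, have second moment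
at most `V` and mean `O(1/n)`, and `eˣ ≤ 1 + x + x² e^|x|` turns this into a Bernstein-type
Chernoff bound which, for `t = 6 log n / (Ln)`, gives probability at most `n⁻²`.
-/

theorem exp_le_one_add_add_sq_mul_exp_abs (x : ℝ) : exp x ≤ 1 + x + x ^ 2 * exp |x| := by
  have key : exp x * (1 - x) ≤ 1 := by
    have := mul_le_mul_of_nonneg_left (add_one_le_exp (-x)) (exp_pos x).le
    rwa [← exp_add, add_neg_cancel, exp_zero, neg_add_eq_sub] at this
  rcases le_or_gt 0 x with hx | hx
  · rw [abs_of_nonneg hx]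
    nlinarith [exp_pos x]
  · have hx2 : 1 + x + x ^ 2 ≤ 1 + x + x ^ 2 * exp |x| := by
      nlinarith [one_le_exp (abs_nonneg x), sq_nonneg x]
    refine le_trans ?_ hx2
    nlinarith [exp_pos x, sq_nonneg x, mul_pos (exp_pos x) (neg_pos.2 hx)]

theorem eventually_mul_log_le_sqrt (c : ℝ) : ∀ᶠ x : ℝ in atTop, c * log x ≤ √x := by
  filter_upwards [(isLittleO_log_rpow_atTop one_half_pos).def (c := 1 / (|c| + 1)) (by positivity),
    eventually_ge_atTop 1] with x hx hx1
  rw [norm_of_nonneg (log_nonneg hx1), norm_of_nonneg (by positivity), ← sqrt_eq_rpow] at hx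
  calc c * log x ≤ (|c| + 1) * log x :=
        mul_le_mul_of_nonneg_right (by linarith [le_abs_self c]) (log_nonneg hx1)
    _ ≤ (|c| + 1) * (1 / (|c| + 1) * √x) := by gcongr
    _ = √x := by field_simp

theorem tsum_ite_natCast_le_sq {c : ℝ} (hc : 0 ≤ c) :
    ∑' n : ℕ, (if (n : ℝ) ≤ c then (n : ℝ≥0∞) else 0) ≤ ENNReal.ofReal (c ^ 2) := by
  set N := ⌊c⌋₊
  have hvanish : ∀ n ∉ range (N + 1), (if (n : ℝ) ≤ c then (n : ℝ≥0∞) else 0) = 0 := by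
    intro n hn
    rw [mem_range, not_lt] at hn
    rw [if_neg fun h => by have := Nat.le_floor h; omega]
  rw [tsum_eq_sum hvanish]
  calc ∑ n ∈ range (N + 1), (if (n : ℝ) ≤ c then (n : ℝ≥0∞) else 0)
      ≤ ∑ n ∈ range (N + 1), (n : ℝ≥0∞) := sum_le_sum fun n _ => by split_ifs <;> simp
    _ = ∑ n ∈ range N, ((n + 1 : ℕ) : ℝ≥0∞) := by rw [sum_range_succ']; simp
    _ ≤ ∑ _n ∈ range N, (N : ℝ≥0∞) := sum_le_sum fun n hn => by exact_mod_cast mem_range.1 hn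
    _ = (N : ℝ≥0∞) ^ 2 := by simp [sq]
    _ ≤ ENNReal.ofReal c ^ 2 := by
        gcongr
        rw [← ENNReal.ofReal_natCast]
        exact ENNReal.ofReal_le_ofReal (Nat.floor_le hc)
    _ = ENNReal.ofReal (c ^ 2) := (ENNReal.ofReal_pow hc 2).symm

section Measure

variable {Ω : Type*} [MeasurableSpace Ω] {P : Measure Ω}

theorem summable_mul_measureReal_le_abs {Y : Ω → ℝ} (hY : Measurable Y)
    (hY2 : Integrable (fun ω => Y ω ^ 2) P) {ε : ℝ} (hε : 0 < ε) :
    Summable fun n : ℕ => n * P.real {ω | ε * n ≤ |Y ω|} := by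
  have hmeas : ∀ n : ℕ, MeasurableSet {ω | ε * n ≤ |Y ω|} := fun n =>
    measurableSet_le measurable_const hY.abs
  have hlint : ∑' n : ℕ, (n : ℝ≥0∞) * P {ω | ε * n ≤ |Y ω|}
      ≤ ∫⁻ ω, ENNReal.ofReal (Y ω ^ 2 / ε ^ 2) ∂P := by
    simp_rw [← lintegral_indicator_const (hmeas _)]
    rw [← lintegral_tsum fun n => (measurable_const.indicator (hmeas n)).aemeasurable]
    refine lintegral_mono fun ω => ?_
    rw [← sq_abs, ← div_pow]
    refine le_of_eq_of_le (tsum_congr fun n => ?_) (tsum_ite_natCast_le_sq (by positivity))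
    simp only [Set.indicator, Set.mem_ofPred_eq, le_div_iff₀ hε, mul_comm]
  have hfin := ne_top_of_le_ne_top (hY2.div_const (ε ^ 2)).lintegral_lt_top.ne hlint
  simpa [ENNReal.toReal_mul, measureReal_def] using ENNReal.summable_toReal hfin

theorem tsum_measure_ne_top_of_summable [IsFiniteMeasure P] {s : ℕ → Set Ω}
    (h : Summable fun n => P.real (s n)) : ∑' n, P (s n) ≠ ⊤ := by
  have hreal := ENNReal.ofReal_tsum_of_nonneg (fun _ => measureReal_nonneg) h
  simp only [measureReal_def, ENNReal.ofReal_toReal, ne_eq, measure_ne_top,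
    not_false_eq_true] at hreal
  exact hreal ▸ ENNReal.ofReal_ne_top

variable [IsProbabilityMeasure P]

theorem integrable_exp_mul_of_abs_le {Z : Ω → ℝ} (hZ : AEMeasurable Z P) {M : ℝ}
    (hM : ∀ᵐ ω ∂P, |Z ω| ≤ M) (t : ℝ) : Integrable (fun ω => exp (t * Z ω)) P := by
  refine .of_bound (hZ.const_mul t).exp.aestronglyMeasurable (exp (|t| * M)) ?_
  filter_upwards [hM] with ω hω
  rw [norm_of_nonneg (exp_pos _).le, exp_le_exp]
  calc t * Z ω ≤ |t| * |Z ω| := by rw [← abs_mul]; exact le_abs_self _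
    _ ≤ |t| * M := by gcongr

theorem mgf_le_exp_of_abs_le {Z : Ω → ℝ} (hZ : AEMeasurable Z P) {M : ℝ}
    (hM : ∀ᵐ ω ∂P, |Z ω| ≤ M) {t : ℝ} (ht : 0 ≤ t) :
    mgf Z P t ≤ exp (t * P[Z] + t ^ 2 * P[fun ω => Z ω ^ 2] * exp (t * M)) := by
  have hint : Integrable Z P :=
    .of_bound hZ.aestronglyMeasurable M (by simpa only [Real.norm_eq_abs] using hM)
  have hint2 : Integrable (fun ω => Z ω ^ 2) P :=
    .of_bound (hZ.pow_const 2).aestronglyMeasurable (M ^ 2) (by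
      filter_upwards [hM] with ω hω
      rw [norm_pow, Real.norm_eq_abs]
      exact pow_le_pow_left₀ (abs_nonneg _) hω 2)
  have hpointwise : ∀ᵐ ω ∂P, exp (t * Z ω) ≤ 1 + t * Z ω + t ^ 2 * exp (t * M) * Z ω ^ 2 := by
    filter_upwards [hM] with ω hω
    have habs : exp |t * Z ω| ≤ exp (t * M) := by
      rw [exp_le_exp, abs_mul, abs_of_nonneg ht]
      exact mul_le_mul_of_nonneg_left hω ht
    nlinarith [exp_le_one_add_add_sq_mul_exp_abs (t * Z ω), sq_nonneg (t * Z ω)]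
  calc mgf Z P t ≤ ∫ ω, (1 + t * Z ω + t ^ 2 * exp (t * M) * Z ω ^ 2) ∂P :=
        integral_mono_ae (integrable_exp_mul_of_abs_le hZ hM t)
          (((integrable_const 1).add (hint.const_mul t)).add (hint2.const_mul _)) hpointwise
    _ = 1 + (t * P[Z] + t ^ 2 * P[fun ω => Z ω ^ 2] * exp (t * M)) := by
        rw [integral_add (f := fun ω => 1 + t * Z ω)
            ((integrable_const 1).add (hint.const_mul t)) (hint2.const_mul _),
          integral_add (f := fun _ => (1 : ℝ)) (integrable_const 1) (hint.const_mul t),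
          integral_const_mul, integral_const_mul]
        simp only [integral_const, probReal_univ, one_smul]
        ring
    _ ≤ _ := by linarith [add_one_le_exp (t * P[Z] + t ^ 2 * P[fun ω => Z ω ^ 2] * exp (t * M))]

theorem measureReal_le_sum_range_le_exp {Z : ℕ → Ω → ℝ} (hmeas : ∀ i, Measurable (Z i))
    (hindep : iIndepFun Z P) (hident : ∀ i, IdentDistrib (Z i) (Z 0) P P) {M : ℝ}
    (hM : ∀ᵐ ω ∂P, |Z 0 ω| ≤ M) (n : ℕ) {t : ℝ} (ht : 0 ≤ t) (a : ℝ) :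
    P.real {ω | a ≤ ∑ i ∈ range n, Z i ω}
      ≤ exp (-t * a + n * (t * P[Z 0] + t ^ 2 * P[fun ω => Z 0 ω ^ 2] * exp (t * M))) := by
  have hint : ∀ i, Integrable (fun ω => exp (t * Z i ω)) P := fun i =>
    ((hident i).comp (measurable_const_mul t).exp).integrable_iff.2
      (integrable_exp_mul_of_abs_le (hmeas 0).aemeasurable hM t)
  have hmgf : mgf (∑ i ∈ range n, Z i) P t = mgf (Z 0) P t ^ n := by
    rw [hindep.mgf_sum hmeas,
      prod_eq_pow_card fun i _ => mgf_congr_of_identDistrib _ _ (hident i) t, card_range]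
  have hsum_int : Integrable (fun ω => exp (t * ∑ i ∈ range n, Z i ω)) P := by
    simpa only [Finset.sum_apply] using hindep.integrable_exp_mul_sum hmeas fun i _ => hint i
  calc P.real {ω | a ≤ ∑ i ∈ range n, Z i ω}
      ≤ exp (-t * a) * mgf (fun ω => ∑ i ∈ range n, Z i ω) P t :=
        measure_ge_le_exp_mul_mgf a ht hsum_int
    _ ≤ exp (-t * a) * exp (t * P[Z 0] + t ^ 2 * P[fun ω => Z 0 ω ^ 2] * exp (t * M)) ^ n := by
        rw [← Finset.sum_fn, hmgf]
        gcongr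
        · exact mgf_nonneg
        · exact mgf_le_exp_of_abs_le (hmeas 0).aemeasurable hM ht
    _ = _ := by rw [← exp_nat_mul, ← exp_add]

theorem integral_sq_truncation_le {Y : Ω → ℝ} (hY : AEStronglyMeasurable Y P)
    (hY2 : Integrable (fun ω => Y ω ^ 2) P) (A : ℝ) :
    P[fun ω => truncation Y A ω ^ 2] ≤ P[fun ω => Y ω ^ 2] :=
  integral_mono (hY.memLp_truncation.integrable_sq) hY2 fun ω =>
    sq_le_sq.2 (abs_truncation_le_abs_self Y A ω)

theorem abs_integral_truncation_le {Y : Ω → ℝ} (hY : Integrable Y P) (hmean : P[Y] = 0)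
    (hY2 : Integrable (fun ω => Y ω ^ 2) P) {A : ℝ} (hA : 0 < A) :
    |P[truncation Y A]| ≤ P[fun ω => Y ω ^ 2] / A := by
  have hpointwise : ∀ ω, |Y ω - truncation Y A ω| ≤ Y ω ^ 2 / A := by
    intro ω
    by_cases h : |Y ω| < A
    · rw [truncation_eq_self h, sub_self, abs_zero]
      positivity
    · have hle : |Y ω - truncation Y A ω| ≤ |Y ω| := by
        simp only [truncation, Set.indicator, Function.comp_apply, id]
        split_ifs <;> simp
      rw [le_div_iff₀ hA, ← sq_abs]
      nlinarith [abs_nonneg (Y ω - truncation Y A ω)]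
  calc |P[truncation Y A]| = |P[fun ω => Y ω - truncation Y A ω]| := by
        rw [integral_sub hY hY.1.integrable_truncation, hmean, zero_sub, abs_neg]
    _ ≤ ∫ ω, |Y ω - truncation Y A ω| ∂P := abs_integral_le_integral_abs
    _ ≤ ∫ ω, Y ω ^ 2 / A ∂P :=
        integral_mono (hY.sub hY.1.integrable_truncation).abs (hY2.div_const A) hpointwise
    _ = P[fun ω => Y ω ^ 2] / A := by rw [integral_div]

theorem measureReal_lt_sum_range_le {Y : ℕ → Ω → ℝ} (hident : ∀ i, IdentDistrib (Y i) (Y 0) P P)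
    (n : ℕ) (a A : ℝ) :
    P.real {ω | a < ∑ i ∈ range n, Y i ω}
      ≤ n * P.real {ω | A ≤ |Y 0 ω|} + P.real {ω | a ≤ ∑ i ∈ range n, truncation (Y i) A ω} := by
  have hsub : {ω | a < ∑ i ∈ range n, Y i ω}
      ⊆ (⋃ i ∈ range n, {ω | A ≤ |Y i ω|}) ∪ {ω | a ≤ ∑ i ∈ range n, truncation (Y i) A ω} := by
    intro ω hω
    by_cases hjump : ∃ i ∈ range n, A ≤ |Y i ω|
    · obtain ⟨i, hi, h⟩ := hjump
      exact Or.inl (Set.mem_biUnion hi h)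
    · push Not at hjump
      have hsum : ∑ i ∈ range n, truncation (Y i) A ω = ∑ i ∈ range n, Y i ω :=
        sum_congr rfl fun i hi => truncation_eq_self (hjump i hi)
      exact Or.inr (show a ≤ _ from hsum ▸ le_of_lt hω)
  have htail : ∀ i, P.real {ω | A ≤ |Y i ω|} = P.real {ω | A ≤ |Y 0 ω|} := fun i => by
    simp only [measureReal_def]
    exact congrArg ENNReal.toReal <| (hident i).measure_mem_eq (s := {x | A ≤ |x|})
      (measurableSet_le measurable_const measurable_abs)
  calc P.real {ω | a < ∑ i ∈ range n, Y i ω}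
      ≤ P.real (⋃ i ∈ range n, {ω | A ≤ |Y i ω|})
        + P.real {ω | a ≤ ∑ i ∈ range n, truncation (Y i) A ω} :=
        (measureReal_mono hsub).trans (measureReal_union_le _ _)
    _ ≤ _ := by
        gcongr
        refine (measureReal_biUnion_finset_le _ _).trans ?_
        simp [htail]

theorem measureReal_le_sum_range_truncation_le {Y : ℕ → Ω → ℝ} (hmeas : ∀ i, Measurable (Y i))
    (hindep : iIndepFun Y P) (hident : ∀ i, IdentDistrib (Y i) (Y 0) P P)
    (hY : Integrable (Y 0) P) (hmean : P[Y 0] = 0) (hY2 : Integrable (fun ω => Y 0 ω ^ 2) P)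
    {L : ℝ} (hL : 0 < L) {n : ℕ} (hn : 1 ≤ n)
    (hvar : 24 * P[fun ω => Y 0 ω ^ 2] ≤ L ^ 2 * n)
    (hlog : 36 * P[fun ω => Y 0 ω ^ 2] * log n ≤ L ^ 2 * √n) :
    P.real {ω | L * n ≤ ∑ i ∈ range n, truncation (Y i) (L * n / 12) ω} ≤ 1 / n ^ 2 := by
  set x : ℝ := (n : ℝ)
  set A := L * x / 12
  set V := P[fun ω => Y 0 ω ^ 2]
  set ℓ := log x
  have hx : 1 ≤ x := Nat.one_le_cast.2 hn
  have hA : 0 < A := by positivity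
  have hℓ : 0 ≤ ℓ := log_nonneg hx
  have htrunc : Measurable (Set.indicator (Set.Ioc (-A) A) id) :=
    measurable_id.indicator measurableSet_Ioc
  have hchernoff := measureReal_le_sum_range_le_exp (Z := fun i => truncation (Y i) A)
    (fun i => htrunc.comp (hmeas i)) (hindep.comp _ fun _ => htrunc)
    (fun i => (hident i).comp htrunc)
    (M := A) (ae_of_all _ fun ω => (abs_truncation_le_bound _ _ ω).trans_eq (abs_of_pos hA))
    n (t := 6 * ℓ / (L * x)) (by positivity) (L * x)
  refine hchernoff.trans ?_
  -- `t A = (log n) / 2`, so `exp (t A) = √n` and the exponent is at most `-6ℓ + 3ℓ + ℓ`.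
  set t := 6 * ℓ / (L * x) with ht
  set m := P[truncation (Y 0) A]
  have hm : |m| ≤ V / A := abs_integral_truncation_le hY hmean hY2 hA
  have hV' : P[fun ω => truncation (Y 0) A ω ^ 2] ≤ V :=
    integral_sq_truncation_le hY.1 hY2 A
  have hlin : t * (L * x) = 6 * ℓ := by rw [ht]; field_simp
  have hsqrt : exp (t * A) = √x := by
    rw [show t * A = ℓ / 2 by rw [ht]; field_simp; ring, exp_half, exp_log (by positivity)]
  have hdrift : x * (t * m) ≤ 3 * ℓ := by
    calc x * (t * m) ≤ x * (t * (V / A)) := by gcongr; exact (le_abs_self m).trans hm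
      _ = 72 * V * ℓ / (L ^ 2 * x) := by rw [ht]; field_simp; ring
      _ ≤ 3 * ℓ := by rw [div_le_iff₀ (by positivity)]; nlinarith
  have hspread : x * (t ^ 2 * P[fun ω => truncation (Y 0) A ω ^ 2] * √x) ≤ ℓ := by
    calc x * (t ^ 2 * P[fun ω => truncation (Y 0) A ω ^ 2] * √x) ≤ x * (t ^ 2 * V * √x) := by
          gcongr
      _ = (36 * V * ℓ) * ℓ * √x / (L ^ 2 * x) := by rw [ht]; field_simp; ring
      _ ≤ (L ^ 2 * √x) * ℓ * √x / (L ^ 2 * x) := by gcongr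
      _ = L ^ 2 * (√x * √x) * ℓ / (L ^ 2 * x) := by ring
      _ = ℓ := by rw [mul_self_sqrt (by positivity)]; field_simp
  calc exp (-t * (L * x)
        + x * (t * m + t ^ 2 * P[fun ω => truncation (Y 0) A ω ^ 2] * exp (t * A)))
      ≤ exp (-(2 * ℓ)) := by rw [hsqrt, exp_le_exp, neg_mul, hlin, mul_add]; linarith
    _ = 1 / x ^ 2 := by rw [exp_neg, two_mul, exp_add, exp_log (by positivity)]; ring

theorem summable_measureReal_lt_sum_range {Y : ℕ → Ω → ℝ} (hmeas : ∀ i, Measurable (Y i))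
    (hindep : iIndepFun Y P) (hident : ∀ i, IdentDistrib (Y i) (Y 0) P P)
    (hY : Integrable (Y 0) P) (hmean : P[Y 0] = 0) (hY2 : Integrable (fun ω => Y 0 ω ^ 2) P)
    {L : ℝ} (hL : 0 < L) :
    Summable fun n : ℕ => P.real {ω | L * n < ∑ i ∈ range n, Y i ω} := by
  set V := P[fun ω => Y 0 ω ^ 2]
  have hvar : ∀ᶠ n : ℕ in atTop, 24 * V ≤ L ^ 2 * n := by
    filter_upwards [tendsto_natCast_atTop_atTop.eventually_ge_atTop (24 * V / L ^ 2)] with n hn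
    rwa [div_le_iff₀' (by positivity)] at hn
  have hlog : ∀ᶠ n : ℕ in atTop, 36 * V * log n ≤ L ^ 2 * √n := by
    filter_upwards
      [tendsto_natCast_atTop_atTop.eventually (eventually_mul_log_le_sqrt (36 * V / L ^ 2))]
      with n hn
    rwa [div_mul_eq_mul_div, div_le_iff₀' (by positivity)] at hn
  refine .of_norm_bounded_eventually_nat
    ((summable_mul_measureReal_le_abs (hmeas 0) hY2 (ε := L / 12) (by positivity)).add
      (Real.summable_one_div_nat_pow.2 one_lt_two)) ?_
  filter_upwards [eventually_ge_atTop 1, hvar, hlog] with n hn hvar hlog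
  rw [norm_of_nonneg measureReal_nonneg]
  refine (measureReal_lt_sum_range_le hident n _ (L * n / 12)).trans ?_
  rw [show L / 12 * (n : ℝ) = L * n / 12 by ring]
  gcongr
  exact measureReal_le_sum_range_truncation_le hmeas hindep hident hY hmean hY2 hL hn hvar hlog

end Measure

/-- Hsu–Robbins: for an i.i.d. random walk with mean `μ` and finite second
moment, the probabilities of exceeding a line of slope `L + μ` with `L > 0`
are summable. -/
theorem stmt_4 {Ω : Type*} [MeasurableSpace Ω] (P : Measure Ω) [IsProbabilityMeasure P]
    (X : ℕ → Ω → ℝ) (hmeas : ∀ i, Measurable (X i))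
    (hindep : iIndepFun X P)
    (hident : ∀ i, IdentDistrib (X i) (X 0) P P)
    (hint : Integrable (X 0) P) (μ : ℝ) (hmean : P[X 0] = μ)
    (hmom2 : Integrable (fun ω => (X 0 ω) ^ 2) P)
    (L : ℝ) (hL : 0 < L) :
    (∑' k : ℕ, P {ω | (L + μ) * (k + 1 : ℕ) < ∑ i ∈ Finset.range (k + 1), X i ω}) ≠ ⊤ := by
  set Y : ℕ → Ω → ℝ := fun i ω => X i ω - μ
  have hYmean : P[Y 0] = 0 := by
    simp [Y, integral_sub hint (integrable_const μ), hmean]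
  have hY2 : Integrable (fun ω => Y 0 ω ^ 2) P := by
    have : (fun ω => Y 0 ω ^ 2) = fun ω => X 0 ω ^ 2 - 2 * μ * X 0 ω + μ ^ 2 := by
      ext ω; ring
    rw [this]
    exact (hmom2.sub (hint.const_mul _)).add (integrable_const _)
  have hsummable := summable_measureReal_lt_sum_range (Y := Y) (fun i => (hmeas i).sub_const μ)
    (hindep.comp _ fun _ => measurable_id.sub_const μ)
    (fun i => (hident i).comp (measurable_id.sub_const μ)) (hint.sub (integrable_const μ))
    hYmean hY2 hL
  have hevent : ∀ n : ℕ, {ω | (L + μ) * n < ∑ i ∈ range n, X i ω}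
      = {ω | L * n < ∑ i ∈ range n, Y i ω} := by
    intro n
    ext ω
    simp only [Y, Set.mem_ofPred_eq, sum_sub_distrib, sum_const, card_range, nsmul_eq_mul]
    constructor <;> intro h <;> linarith
  simp_rw [hevent]
  exact tsum_measure_ne_top_of_summable
    ((summable_nat_add_iff (f := fun n : ℕ => P.real {ω | L * n < ∑ i ∈ range n, Y i ω}) 1).2
      hsummable)
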